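/- A nontrivial bipartite graph G is square-complementary if and only if G has diameter 3 and G is isomorphic to its bipartite complement. -/

import Mathlib

open SimpleGraph

/-- The square of a graph: two distinct vertices are adjacent iff they are at
distance at most 2 in `G`, i.e. adjacent or having a common neighbor. -/
def SimpleGraph.square {V : Type*} (G : SimpleGraph V) : SimpleGraph V where
  Adj u v := u ≠ v ∧ (G.Adj u v ∨ ∃ w, G.Adj u w ∧ G.Adj w v)
  symm := ⟨by
    rintro u v ⟨h, h' | ⟨w, hw1, hw2⟩⟩
    · exact ⟨h.symm, Or.inl h'.symm⟩
    · exact ⟨h.symm, Or.inr ⟨w, hw2.symm, hw1.symm⟩⟩⟩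
  loopless := ⟨by rintro v ⟨h, -⟩; exact h rfl⟩

/-- A graph is square-complementary (squco) if its square is isomorphic to its
complement. -/
def SimpleGraph.IsSquco {V : Type*} (G : SimpleGraph V) : Prop :=
  Nonempty (G.square ≃g Gᶜ)

/-- `{A, B}` is a bipartition of `G`: the two sets partition the vertex set and
every edge of `G` joins a vertex of `A` to a vertex of `B`. -/
def SimpleGraph.IsBipartitionOf {V : Type*} (G : SimpleGraph V) (A B : Set V) : Prop :=
  (∀ v, v ∈ A ↔ v ∉ B) ∧ ∀ ⦃u v⦄, G.Adj u v → (u ∈ A ∧ v ∈ B) ∨ (u ∈ B ∧ v ∈ A)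

/-- The bipartite complement of `G` with respect to the bipartition `{A, B}`:
its edges are exactly the non-edges of `G` joining `A` and `B`. -/
def SimpleGraph.bipCompl {V : Type*} (G : SimpleGraph V) (A B : Set V) : SimpleGraph V where
  Adj u v := u ≠ v ∧ ((u ∈ A ∧ v ∈ B) ∨ (u ∈ B ∧ v ∈ A)) ∧ ¬ G.Adj u v
  symm := ⟨by
    rintro u v ⟨hne, hAB | hBA, hn⟩
    · exact ⟨hne.symm, Or.inr ⟨hAB.2, hAB.1⟩, fun h => hn h.symm⟩
    · exact ⟨hne.symm, Or.inl ⟨hBA.2, hBA.1⟩, fun h => hn h.symm⟩⟩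
  loopless := ⟨by rintro v ⟨h, -⟩; exact h rfl⟩

/-!
Everything hinges on the fact that two vertices on the same side of a bipartite square-complementary
graph `G` always have a common neighbour. Granting it, `G²` is exactly the complement of the
bipartite complement, so `(G²)ᶜ`, which is isomorphic to `G`, is the bipartite complement; and `G`
has diameter 3: same-side pairs are within distance 2, cross pairs within 3, and `(G²)ᶜ ≅ G` has
an edge. Conversely, in a bipartite graph of diameter 3 parity forces same-side pairs to distance
2, so again `G² = (bipCompl)ᶜ`, and complementing `G ≅ bipCompl` gives `Gᶜ ≅ G²`.

For the key fact let `H = (G²)ᶜ`, which is bipartite since `H ≅ G`. If `u, v ∈ A` have no common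
neighbour then, as `H` has neither triangles nor 5-cycles, `N(u) ⊔ N(v) = B` and every `x ∈ A` has
`N(u) ⊆ N(x)` or `N(v) ⊆ N(x)`. Through the isomorphism `H ≅ G`, `u, v` yield two vertices of `H`
on one side whose `H`-neighbourhoods partition the other side. The description of `G` just given
pins down enough of the far sets in `G` (the `H`-neighbourhoods) to rule out such a pair, by a
short case analysis on where its two vertices lie relative to `u` and `v`.
-/

namespace SimpleGraph

variable {V W : Type*} {G : SimpleGraph V} {H : SimpleGraph W} {A B X Y : Set V}
  {u v x y z p p' : V}

def Iso.compl (e : G ≃g H) : Gᶜ ≃g Hᶜ where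
  toEquiv := e.toEquiv
  map_rel_iff' := by simp [compl_adj, e.map_adj_iff]

theorem compl_square_adj :
    (G.square)ᶜ.Adj x y ↔ x ≠ y ∧ ¬G.Adj x y ∧ ∀ w, G.Adj x w → ¬G.Adj w y := by
  simp only [compl_adj, square, ne_eq, not_and, not_or, not_exists]
  tauto

theorem two_lt_edist_of_compl_square_adj (h : (G.square)ᶜ.Adj x y) : 2 < G.edist x y := by
  obtain ⟨hxy, hnadj, hncn⟩ := compl_square_adj.mp h
  refine two_lt_edist_iff.mpr ⟨hxy, hnadj, Set.eq_empty_of_forall_notMem fun w hw => ?_⟩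
  exact hncn w hw.1 (G.adj_symm hw.2)

theorem compl_square_adj_of_neighborSet_subset (hu : (G.neighborSet u).Nonempty)
    (hux : G.neighborSet u ⊆ G.neighborSet x) (h : (G.square)ᶜ.Adj x y) :
    (G.square)ᶜ.Adj u y := by
  obtain ⟨hxy, hnadj, hncn⟩ := compl_square_adj.mp h
  obtain ⟨w, hw⟩ := hu
  refine compl_square_adj.mpr ⟨?_, fun huy => hnadj (hux huy), fun z huz => hncn z (hux huz)⟩
  rintro rfl
  exact hncn w (hux hw) hw.symm

theorem IsSquco.exists_adj [Nontrivial V] (hG : G.IsSquco) (x : V) : ∃ y, G.Adj x y := by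
  obtain ⟨ψ⟩ := hG
  by_contra! hx
  have hfull : ∀ z, z ≠ ψ x → G.Adj (ψ x) z := by
    intro z hz
    have hsq : ¬G.square.Adj x (ψ.symm z) := by
      rintro ⟨-, h | ⟨w, hw, -⟩⟩
      exacts [hx _ h, hx w hw]
    by_contra hn
    exact hsq (ψ.map_adj_iff.mp (by simpa [compl_adj, hz.symm] using hn))
  by_cases hψ : ψ x = x
  · obtain ⟨z, hz⟩ := exists_ne x
    have hxz := hfull z (by rwa [hψ])
    rw [hψ] at hxz
    exact hx z hxz
  · exact hx (ψ x) (hfull x (Ne.symm hψ)).symm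

theorem IsSquco.nonempty_iso_compl_square (hG : G.IsSquco) : Nonempty ((G.square)ᶜ ≃g G) := by
  obtain ⟨ψ⟩ := hG
  have e := ψ.compl
  rw [compl_compl] at e
  exact ⟨e⟩

theorem Iso.exists_adj (e : H ≃g G) (hG : ∀ x, ∃ y, G.Adj x y) (x : W) : ∃ y, H.Adj x y := by
  obtain ⟨y, hy⟩ := hG (e x)
  exact ⟨e.symm y, e.map_adj_iff.mp (by simpa using hy)⟩

namespace IsBipartitionOf

theorem mem_iff_notMem_of_adj (hbip : G.IsBipartitionOf A B) (h : G.Adj x y) :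
    x ∈ A ↔ y ∉ A := by
  have := hbip.1 x
  have := hbip.1 y
  have := hbip.2 h
  tauto

theorem symm (hbip : G.IsBipartitionOf A B) : G.IsBipartitionOf B A :=
  ⟨fun x => by have := hbip.1 x; tauto, fun _ _ h => (hbip.2 h).symm⟩

theorem comap (hbip : G.IsBipartitionOf A B) (e : H ≃g G) :
    H.IsBipartitionOf (e ⁻¹' A) (e ⁻¹' B) :=
  ⟨fun x => hbip.1 (e x), fun _ _ h => hbip.2 (e.map_adj_iff.mpr h)⟩

theorem even_length_iff (hbip : G.IsBipartitionOf A B) (q : G.Walk x y) :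
    Even q.length ↔ (x ∈ A ↔ y ∈ A) := by
  induction q with
  | nil => simp
  | cons h q ih =>
    rw [Walk.length_cons, Nat.even_add_one, ih, hbip.mem_iff_notMem_of_adj h]
    tauto

theorem compl_square_adj_of_not_adj (hbip : G.IsBipartitionOf A B) (hx : x ∈ A) (hy : y ∉ A)
    (h : ¬G.Adj x y) : (G.square)ᶜ.Adj x y := by
  refine compl_square_adj.mpr ⟨fun hxy => hy (hxy ▸ hx), h, fun w hxw hwy => ?_⟩
  have := hbip.mem_iff_notMem_of_adj hxw
  have := hbip.mem_iff_notMem_of_adj hwy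
  tauto

theorem adj_or_adj_of_compl_square_adj (hbip : G.IsBipartitionOf A B)
    (hH : (G.square)ᶜ.IsBipartitionOf X Y) (hu : u ∈ A) (hv : v ∈ A)
    (huv : (G.square)ᶜ.Adj u v) (hz : z ∉ A) : G.Adj u z ∨ G.Adj v z := by
  by_contra! h
  have := hH.mem_iff_notMem_of_adj huv
  have := hH.mem_iff_notMem_of_adj (hbip.compl_square_adj_of_not_adj hu hz h.1)
  have := hH.mem_iff_notMem_of_adj (hbip.compl_square_adj_of_not_adj hv hz h.2)
  tauto

theorem neighborSet_subset_or_subset_of_compl_square_adj (hbip : G.IsBipartitionOf A B)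
    (hH : (G.square)ᶜ.IsBipartitionOf X Y) (hu : u ∈ A) (hv : v ∈ A)
    (huv : (G.square)ᶜ.Adj u v) (hx : x ∈ A) :
    G.neighborSet u ⊆ G.neighborSet x ∨ G.neighborSet v ⊆ G.neighborSet x := by
  by_contra! h
  obtain ⟨z₁, hz₁u, hz₁x⟩ := Set.not_subset.mp h.1
  obtain ⟨z₂, hz₂v, hz₂x⟩ := Set.not_subset.mp h.2
  have hncn := (compl_square_adj.mp huv).2.2
  have hz₁ : z₁ ∉ A := (hbip.mem_iff_notMem_of_adj hz₁u).mp hu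
  have hz₂ : z₂ ∉ A := (hbip.mem_iff_notMem_of_adj hz₂v).mp hv
  -- `x z₁ v u z₂ x` would be a closed walk of length 5 in the bipartite graph `(G.square)ᶜ`.
  have := hH.mem_iff_notMem_of_adj (hbip.compl_square_adj_of_not_adj hx hz₁ hz₁x)
  have := hH.mem_iff_notMem_of_adj
    (hbip.compl_square_adj_of_not_adj hv hz₁ fun h => hncn z₁ hz₁u h.symm)
  have := hH.mem_iff_notMem_of_adj huv
  have := hH.mem_iff_notMem_of_adj
    (hbip.compl_square_adj_of_not_adj hu hz₂ fun h => hncn z₂ h (G.adj_symm hz₂v))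
  have := hH.mem_iff_notMem_of_adj (hbip.compl_square_adj_of_not_adj hx hz₂ hz₂x)
  tauto

theorem mem_of_not_compl_square_adj (hbip : G.IsBipartitionOf A B)
    (hH : (G.square)ᶜ.IsBipartitionOf X Y) (hu : u ∈ A) (hv : v ∈ A)
    (huv : (G.square)ᶜ.Adj u v) (huX : u ∈ X) (hxX : x ∈ X) (hxv : ¬(G.square)ᶜ.Adj x v) :
    x ∈ A := by
  by_contra hx
  have hncn := (compl_square_adj.mp huv).2.2
  rcases hbip.adj_or_adj_of_compl_square_adj hH hu hv huv hx with h | h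
  · exact hxv (hbip.compl_square_adj_of_not_adj hv hx fun h' => hncn x h h'.symm).symm
  · have hux := hbip.compl_square_adj_of_not_adj hu hx fun h' => hncn x h' (G.adj_symm h)
    exact (hH.mem_iff_notMem_of_adj hux).mp huX hxX

theorem exists_common_compl_square_adj_of_compl_square_adj (hbip : G.IsBipartitionOf A B)
    (hH : (G.square)ᶜ.IsBipartitionOf X Y) (hu : u ∈ A) (hv : v ∈ A)
    (huv : (G.square)ᶜ.Adj u v) (hGne : ∀ x, ∃ y, G.Adj x y)
    (hHne : ∀ x, ∃ y, (G.square)ᶜ.Adj x y) (huX : u ∈ X) (hp' : p' ∈ X)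
    (hpv : (G.square)ᶜ.Adj p v) (hcover : ∀ y ∉ X, (G.square)ᶜ.Adj p y ∨ (G.square)ᶜ.Adj p' y) :
    ∃ y, (G.square)ᶜ.Adj p y ∧ (G.square)ᶜ.Adj p' y := by
  by_contra! hdisj
  have hncn := (compl_square_adj.mp huv).2.2
  have hvX : v ∉ X := (hH.mem_iff_notMem_of_adj huv).mp huX
  have hp'v : ¬(G.square)ᶜ.Adj p' v := hdisj v hpv
  have hp'A : p' ∈ A := hbip.mem_of_not_compl_square_adj hH hu hv huv huX hp' hp'v
  obtain ⟨y, hp'y⟩ := hHne p'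
  rcases hbip.neighborSet_subset_or_subset_of_compl_square_adj hH hu hv huv hp'A with hsub | hsub
  · have huy := compl_square_adj_of_neighborSet_subset (hGne u) hsub hp'y
    by_cases hpA : p ∈ A
    · have hpu : G.neighborSet p ⊆ G.neighborSet u := fun z hz =>
        (hbip.adj_or_adj_of_compl_square_adj hH hu hv huv
          ((hbip.mem_iff_notMem_of_adj hz).mp hpA)).resolve_right
          fun hvz => (compl_square_adj.mp hpv).2.2 z hz hvz.symm
      exact hdisj y (compl_square_adj_of_neighborSet_subset (hGne p) hpu huy) hp'y
    · -- Here `p ∈ N(u) ⊆ N(p')`. A common neighbour of `p'` and `v` is far from `u`, hence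
      -- (by `hcover`) far from `p` or `p'`, yet it is within distance 2 of both.
      have hup : G.Adj u p := (hbip.adj_or_adj_of_compl_square_adj hH hu hv huv hpA).resolve_right
        fun hvp => (compl_square_adj.mp hpv).2.1 hvp.symm
      obtain ⟨w, hp'w, hwv⟩ : ∃ w, G.Adj p' w ∧ G.Adj w v := by
        by_contra! h
        refine hp'v (compl_square_adj.mpr ⟨fun he => hvX (he ▸ hp'), fun h' => ?_, h⟩)
        exact (hbip.mem_iff_notMem_of_adj h').mp hp'A hv
      have hwA : w ∉ A := (hbip.mem_iff_notMem_of_adj hp'w).mp hp'A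
      have huw := hbip.compl_square_adj_of_not_adj hu hwA fun h => hncn w h hwv
      rcases hcover w ((hH.mem_iff_notMem_of_adj huw).mp huX) with h | h
      · exact (compl_square_adj.mp h).2.2 p' (hsub hup).symm hp'w
      · exact (compl_square_adj.mp h).2.1 hp'w
  · -- Every vertex far from `p'` is far from `v`, but `p'` and `v` lie on opposite sides.
    have hvy := compl_square_adj_of_neighborSet_subset (hGne v) hsub hp'y
    have := hH.mem_iff_notMem_of_adj hp'y
    have := hH.mem_iff_notMem_of_adj hvy
    tauto

theorem exists_common_compl_square_adj (hbip : G.IsBipartitionOf A B)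
    (hH : (G.square)ᶜ.IsBipartitionOf X Y) (hu : u ∈ A) (hv : v ∈ A)
    (huv : (G.square)ᶜ.Adj u v) (hGne : ∀ x, ∃ y, G.Adj x y)
    (hHne : ∀ x, ∃ y, (G.square)ᶜ.Adj x y) (huX : u ∈ X) (hp : p ∈ X) (hp' : p' ∈ X)
    (hcover : ∀ y ∉ X, (G.square)ᶜ.Adj p y ∨ (G.square)ᶜ.Adj p' y) :
    ∃ y, (G.square)ᶜ.Adj p y ∧ (G.square)ᶜ.Adj p' y := by
  rcases hcover v ((hH.mem_iff_notMem_of_adj huv).mp huX) with hpv | hp'v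
  · exact hbip.exists_common_compl_square_adj_of_compl_square_adj hH hu hv huv hGne hHne huX
      hp' hpv hcover
  · obtain ⟨y, hy⟩ := hbip.exists_common_compl_square_adj_of_compl_square_adj hH hu hv huv hGne
      hHne huX hp hp'v fun y hy => (hcover y hy).symm
    exact ⟨y, hy.symm⟩

theorem exists_adj_adj_of_isSquco_of_mem [Nontrivial V] (hbip : G.IsBipartitionOf A B)
    (hG : G.IsSquco) (hx : x ∈ A) (hy : y ∈ A) (hxy : x ≠ y) : ∃ w, G.Adj x w ∧ G.Adj w y := by
  by_contra! hn
  have huv : (G.square)ᶜ.Adj x y :=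
    compl_square_adj.mpr ⟨hxy, fun h => (hbip.mem_iff_notMem_of_adj h).mp hx hy, hn⟩
  obtain ⟨φ⟩ := hG.nonempty_iso_compl_square
  have hGne := hG.exists_adj
  have hH := hbip.comap φ
  have hcover : ∀ z ∉ φ ⁻¹' A,
      (G.square)ᶜ.Adj (φ.symm x) z ∨ (G.square)ᶜ.Adj (φ.symm y) z := fun z hz =>
    (hbip.adj_or_adj_of_compl_square_adj hH hx hy huv hz).imp
      (fun h => φ.map_adj_iff.mp (by simpa using h)) (fun h => φ.map_adj_iff.mp (by simpa using h))
  have hcommon : ¬∃ z, (G.square)ᶜ.Adj (φ.symm x) z ∧ (G.square)ᶜ.Adj (φ.symm y) z := by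
    rintro ⟨z, hxz, hyz⟩
    exact hn (φ z) (by simpa using φ.map_adj_iff.mpr hxz)
      (by simpa using (φ.map_adj_iff.mpr hyz).symm)
  have hpX : φ.symm x ∈ φ ⁻¹' A := by simpa using hx
  have hp'X : φ.symm y ∈ φ ⁻¹' A := by simpa using hy
  by_cases hxX : x ∈ φ ⁻¹' A
  · exact hcommon (hbip.exists_common_compl_square_adj hH hx hy huv hGne (φ.exists_adj hGne) hxX
      hpX hp'X hcover)
  · have hyX : y ∈ φ ⁻¹' A := by have := hH.mem_iff_notMem_of_adj huv; tauto
    exact hcommon (hbip.exists_common_compl_square_adj hH hy hx huv.symm hGne (φ.exists_adj hGne)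
      hyX hpX hp'X hcover)

theorem exists_adj_adj_of_isSquco [Nontrivial V] (hbip : G.IsBipartitionOf A B)
    (hG : G.IsSquco) (hxy : x ≠ y) (hs : x ∈ A ↔ y ∈ A) : ∃ w, G.Adj x w ∧ G.Adj w y := by
  by_cases hx : x ∈ A
  · exact hbip.exists_adj_adj_of_isSquco_of_mem hG hx (hs.mp hx) hxy
  · have := hbip.1 x
    have := hbip.1 y
    exact hbip.symm.exists_adj_adj_of_isSquco_of_mem hG (by tauto) (by tauto) hxy

theorem exists_adj_adj_of_ediam_le_three (hbip : G.IsBipartitionOf A B) (hd : G.ediam ≤ 3)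
    (hxy : x ≠ y) (hs : x ∈ A ↔ y ∈ A) : ∃ w, G.Adj x w ∧ G.Adj w y := by
  have hle : G.edist x y ≤ 3 := edist_le_ediam.trans hd
  obtain ⟨q, hq⟩ := exists_walk_of_edist_ne_top (hle.trans_lt (by decide)).ne
  have hlen : q.length = 2 := by
    have h3 : q.length ≤ 3 := by exact_mod_cast hq ▸ hle
    have h0 : q.length ≠ 0 := fun h => hxy (Walk.eq_of_length_eq_zero h)
    obtain ⟨k, hk⟩ := (hbip.even_length_iff q).mpr hs
    omega
  obtain ⟨w, hw⟩ := (edist_eq_two_iff.mp (by rw [← hq, hlen]; rfl)).2.2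
  exact ⟨w, hw.1, hw.2.symm⟩

theorem square_eq_compl_bipCompl (hbip : G.IsBipartitionOf A B)
    (hcn : ∀ x y, x ≠ y → (x ∈ A ↔ y ∈ A) → ∃ w, G.Adj x w ∧ G.Adj w y) :
    G.square = (G.bipCompl A B)ᶜ := by
  ext x y
  simp only [square, bipCompl, compl_adj]
  have := hbip.1 x
  have := hbip.1 y
  constructor
  · rintro ⟨hxy, h⟩
    refine ⟨hxy, fun ⟨_, hcross, hn⟩ => ?_⟩
    rcases h with h | ⟨w, hxw, hwy⟩
    · exact hn h
    · have := hbip.mem_iff_notMem_of_adj hxw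
      have := hbip.mem_iff_notMem_of_adj hwy
      tauto
  · rintro ⟨hxy, h⟩
    refine ⟨hxy, or_iff_not_imp_left.mpr fun hn => hcn x y hxy ?_⟩
    by_contra hs
    exact h ⟨hxy, by tauto, hn⟩

theorem ediam_eq_three (hbip : G.IsBipartitionOf A B) (hGne : ∀ x, ∃ y, G.Adj x y)
    (hcn : ∀ x y, x ≠ y → (x ∈ A ↔ y ∈ A) → ∃ w, G.Adj x w ∧ G.Adj w y)
    (hfar : ∃ x y, (G.square)ᶜ.Adj x y) : G.ediam = 3 := by
  have hsame : ∀ x y, (x ∈ A ↔ y ∈ A) → G.edist x y ≤ 2 := by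
    intro x y hs
    rcases eq_or_ne x y with rfl | hxy
    · simp
    · obtain ⟨w, hxw, hwy⟩ := hcn x y hxy hs
      simpa using (Walk.cons hxw (Walk.cons hwy Walk.nil)).edist_le
  refine le_antisymm (ediam_le_of_edist_le fun x y => ?_) ?_
  · by_cases hs : x ∈ A ↔ y ∈ A
    · exact (hsame x y hs).trans (by norm_num)
    · obtain ⟨z, hxz⟩ := hGne x
      have hzy : z ∈ A ↔ y ∈ A := by have := hbip.mem_iff_notMem_of_adj hxz; tauto
      calc G.edist x y ≤ G.edist x z + G.edist z y := SimpleGraph.edist_triangle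
        _ ≤ 1 + 2 := add_le_add (edist_le_one_iff_adj_or_eq.mpr (Or.inl hxz)) (hsame z y hzy)
        _ = 3 := by norm_num
  · obtain ⟨x, y, h⟩ := hfar
    exact (Order.add_one_le_of_lt (two_lt_edist_of_compl_square_adj h)).trans edist_le_ediam

end IsBipartitionOf

end SimpleGraph

theorem isSquco_bipartite_iff_general {V : Type*} [Nontrivial V] (G : SimpleGraph V)
    {A B : Set V} (hbip : G.IsBipartitionOf A B) :
    G.IsSquco ↔ G.diam = 3 ∧ Nonempty (G ≃g G.bipCompl A B) := by
  constructor
  · intro hG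
    have hcn : ∀ x y, x ≠ y → (x ∈ A ↔ y ∈ A) → ∃ w, G.Adj x w ∧ G.Adj w y :=
      fun _ _ => hbip.exists_adj_adj_of_isSquco hG
    have hsq : (G.square)ᶜ = G.bipCompl A B := by
      rw [hbip.square_eq_compl_bipCompl hcn, compl_compl]
    obtain ⟨φ⟩ := hG.nonempty_iso_compl_square
    have hfar : ∃ x y, (G.square)ᶜ.Adj x y :=
      ⟨_, φ.exists_adj hG.exists_adj (Classical.arbitrary V)⟩
    refine ⟨?_, ⟨hsq ▸ φ.symm⟩⟩
    rw [diam, hbip.ediam_eq_three hG.exists_adj hcn hfar]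
    rfl
  · rintro ⟨hd, ⟨χ⟩⟩
    have hd' : G.ediam ≤ 3 := by
      rw [← ENat.natCast_toNat (ediam_ne_top_of_diam_ne_zero (by omega)), ← diam, hd]
      rfl
    have hsq := hbip.square_eq_compl_bipCompl fun x y => hbip.exists_adj_adj_of_ediam_le_three hd'
    exact ⟨hsq ▸ χ.compl.symm⟩

/-- A nontrivial bipartite graph is square-complementary iff it has diameter 3
and is isomorphic to its bipartite complement. -/
theorem isSquco_bipartite_iff {V : Type*} [Fintype V] [Nontrivial V] (G : SimpleGraph V)
    {A B : Set V} (hbip : G.IsBipartitionOf A B) :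
    G.IsSquco ↔ G.diam = 3 ∧ Nonempty (G ≃g G.bipCompl A B) :=
  isSquco_bipartite_iff_general G hbip
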